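/- There exists a term rewrite system R (for example R = { a → f(b,b), a → f(b,c), b → c, c → b }) such that both the full rewrite relation →_R and the innermost rewrite relation →i are confluent, but the parallel-innermost rewrite relation ⇉ is not confluent. -/

import Mathlib

namespace ParallelComplexity

/-! ## First-order terms -/

inductive Term (σ : Type) (V : Type) : Type where
  | var : V → Term σ V
  | fn : σ → List (Term σ V) → Term σ V

variable {σ V : Type}

mutual
  /-- Application of a substitution to a term. -/
  def Term.subst (θ : V → Term σ V) : Term σ V → Term σ V
    | Term.var x => θ x
    | Term.fn f ts => Term.fn f (Term.substList θ ts)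
  def Term.substList (θ : V → Term σ V) : List (Term σ V) → List (Term σ V)
    | [] => []
    | t :: ts => Term.subst θ t :: Term.substList θ ts
end

mutual
  /-- The size |t| of a term. -/
  def Term.size : Term σ V → ℕ
    | Term.var _ => 1
    | Term.fn _ ts => 1 + Term.sizeList ts
  def Term.sizeList : List (Term σ V) → ℕ
    | [] => 0
    | t :: ts => Term.size t + Term.sizeList ts
end

/-- Subterm `t|π` at a position (positions are lists of argument indices);
`none` if the position is not a position of `t`. -/
def Term.subtermAt : Term σ V → List ℕ → Option (Term σ V)
  | t, [] => some t
  | Term.var _, _ :: _ => none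
  | Term.fn _ ts, i :: π =>
    match ts[i]? with
    | none => none
    | some u => Term.subtermAt u π

/-- `t[s]π`: replacement of the subterm at position `π` by `s`. -/
def Term.replaceAt : Term σ V → List ℕ → Term σ V → Option (Term σ V)
  | _, [], s => some s
  | Term.var _, _ :: _, _ => none
  | Term.fn f ts, i :: π, s =>
    match ts[i]? with
    | none => none
    | some u =>
      match Term.replaceAt u π s with
      | none => none
      | some u' => some (Term.fn f (ts.set i u'))

def Term.isVar (t : Term σ V) : Prop := ∃ x, t = Term.var x

/-- `x` occurs as a variable in the term. -/
inductive Term.VarIn (x : V) : Term σ V → Prop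
  | var : Term.VarIn x (Term.var x)
  | fn {f : σ} {ts : List (Term σ V)} {t : Term σ V} :
      t ∈ ts → Term.VarIn x t → Term.VarIn x (Term.fn f ts)

/-! ## Term rewrite systems -/

structure Rule (σ V : Type) where
  lhs : Term σ V
  rhs : Term σ V

/-- A well-formed TRS: a finite set of rules `ℓ → r` with `ℓ ∉ V` and
`Var(r) ⊆ Var(ℓ)`. -/
def IsWfTRS (R : Set (Rule σ V)) : Prop :=
  R.Finite ∧ (∀ r ∈ R, ¬ r.lhs.isVar) ∧
    ∀ r ∈ R, ∀ x : V, Term.VarIn x r.rhs → Term.VarIn x r.lhs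

def IsRedex (R : Set (Rule σ V)) (t : Term σ V) : Prop :=
  ∃ r ∈ R, ∃ θ : V → Term σ V, t = Term.subst θ r.lhs

/-- An innermost redex: a redex none of whose proper subterms is a redex. -/
def IsInnermostRedex (R : Set (Rule σ V)) (t : Term σ V) : Prop :=
  IsRedex R t ∧
    ∀ π : List ℕ, π ≠ [] → ∀ u, t.subtermAt π = some u → ¬ IsRedex R u

/-- One rewrite step at position `π`. -/
def RewriteAt (R : Set (Rule σ V)) (π : List ℕ) (s t : Term σ V) : Prop :=
  ∃ r ∈ R, ∃ θ : V → Term σ V,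
    s.subtermAt π = some (Term.subst θ r.lhs) ∧
    s.replaceAt π (Term.subst θ r.rhs) = some t

/-- The rewrite relation `s →_R t`. -/
def Rewrite (R : Set (Rule σ V)) (s t : Term σ V) : Prop := ∃ π, RewriteAt R π s t

/-- The innermost rewrite relation `s →i t`. -/
def InnermostRewrite (R : Set (Rule σ V)) (s t : Term σ V) : Prop :=
  ∃ π, ∃ r ∈ R, ∃ θ : V → Term σ V,
    s.subtermAt π = some (Term.subst θ r.lhs) ∧
    IsInnermostRedex R (Term.subst θ r.lhs) ∧
    s.replaceAt π (Term.subst θ r.rhs) = some t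

def NormalForm (R : Set (Rule σ V)) (t : Term σ V) : Prop := ¬ ∃ u, Rewrite R t u

/-- Parallel-innermost rewriting `s ⇉ t`: `s →i⁺ t` and either
(a) `s` is an innermost redex and `s →i t`, or (b) `s = f(s₁,…,sₙ)`,
`t = f(t₁,…,tₙ)` and each `sₖ ⇉ tₖ` or `sₖ = tₖ` is a normal form. -/
inductive ParInnermost (R : Set (Rule σ V)) : Term σ V → Term σ V → Prop
  | redex {s t : Term σ V} :
      Relation.TransGen (InnermostRewrite R) s t →
      IsInnermostRedex R s → InnermostRewrite R s t → ParInnermost R s t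
  | congr (f : σ) (ss ts : List (Term σ V)) :
      Relation.TransGen (InnermostRewrite R) (Term.fn f ss) (Term.fn f ts) →
      ss.length = ts.length →
      -- each `sₖ ⇉ tₖ`, or `sₖ = tₖ` is a normal form (stated as the
      -- classically equivalent implication to satisfy the kernel's
      -- restrictions on nested inductive occurrences)
      (∀ p ∈ ss.zip ts, ¬ (p.1 = p.2 ∧ NormalForm R p.1) → ParInnermost R p.1 p.2) →
      ParInnermost R (Term.fn f ss) (Term.fn f ts)

/-! ## Abstract properties of relations -/

def Confluent {α : Type} (r : α → α → Prop) : Prop :=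
  ∀ s t u, Relation.ReflTransGen r s t → Relation.ReflTransGen r s u →
    ∃ v, Relation.ReflTransGen r t v ∧ Relation.ReflTransGen r u v

def Deterministic {α : Type} (r : α → α → Prop) : Prop :=
  ∀ s t u, r s t → r s u → t = u

def UniformlyConfluent {α : Type} (r : α → α → Prop) : Prop :=
  ∀ s t u, r s t → r s u → t = u ∨ ∃ v, r t v ∧ r u v

/-! ## Derivation height and runtime complexity -/

/-- `e`-th iterate of a relation. -/
def iterRel {α : Type} (r : α → α → Prop) : ℕ → α → α → Prop
  | 0 => fun a b => a = b
  | n + 1 => fun a c => ∃ b, r a b ∧ iterRel r n b c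

/-- Derivation height `Dh(t, →) = sup { e | ∃ t'. t →^e t' } ∈ ℕ ∪ {ω}`. -/
noncomputable def Dh {α : Type} (r : α → α → Prop) (t : α) : ℕ∞ :=
  sSup { e : ℕ∞ | ∃ n : ℕ, e = (n : ℕ∞) ∧ ∃ t', iterRel r n t t' }

/-- Defined symbols: root symbols of left-hand sides. -/
def Defined (R : Set (Rule σ V)) (f : σ) : Prop :=
  ∃ r ∈ R, ∃ ts : List (Term σ V), r.lhs = Term.fn f ts

def HasDefinedRoot (R : Set (Rule σ V)) (t : Term σ V) : Prop :=
  ∃ f ts, t = Term.fn f ts ∧ Defined R f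

/-- Constructor terms: terms over constructor symbols and variables. -/
inductive ConsTerm (R : Set (Rule σ V)) : Term σ V → Prop
  | var (x : V) : ConsTerm R (Term.var x)
  | fn (f : σ) (ts : List (Term σ V)) :
      ¬ Defined R f → (∀ t ∈ ts, ConsTerm R t) → ConsTerm R (Term.fn f ts)

/-- Basic terms: a defined symbol applied to constructor terms. -/
def BasicTerm (R : Set (Rule σ V)) (t : Term σ V) : Prop :=
  ∃ f ts, t = Term.fn f ts ∧ Defined R f ∧ ∀ u ∈ ts, ConsTerm R u

/-- Innermost runtime complexity. -/
noncomputable def irc (R : Set (Rule σ V)) (n : ℕ) : ℕ∞ :=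
  sSup { d : ℕ∞ | ∃ t, BasicTerm R t ∧ t.size ≤ n ∧ d = Dh (InnermostRewrite R) t }

/-- Parallel-innermost runtime complexity. -/
noncomputable def pirc (R : Set (Rule σ V)) (n : ℕ) : ℕ∞ :=
  sSup { d : ℕ∞ | ∃ t, BasicTerm R t ∧ t.size ≤ n ∧ d = Dh (ParInnermost R) t }

/-! ## Critical pairs -/

def RuleVars (r : Rule σ V) : Set V :=
  { x | Term.VarIn x r.lhs ∨ Term.VarIn x r.rhs }

/-- `r₂` is a variant of `r₁` (each is a substitution instance of the other). -/
def IsVariantOf (r₁ r₂ : Rule σ V) : Prop :=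
  ∃ θ₁ θ₂ : V → Term σ V,
    r₂.lhs = Term.subst θ₁ r₁.lhs ∧ r₂.rhs = Term.subst θ₁ r₁.rhs ∧
    r₁.lhs = Term.subst θ₂ r₂.lhs ∧ r₁.rhs = Term.subst θ₂ r₂.rhs

def Unifies (θ : V → Term σ V) (s t : Term σ V) : Prop :=
  Term.subst θ s = Term.subst θ t

def IsMGU (μ : V → Term σ V) (s t : Term σ V) : Prop :=
  Unifies μ s t ∧
    ∀ δ : V → Term σ V, Unifies δ s t →
      ∃ δ' : V → Term σ V, ∀ x : V, Term.subst δ' (μ x) = δ x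

/-- Critical pairs `⟨uσ[rσ]π, vσ⟩` of a TRS, from variable-renamed copies
`ℓ → r` and `u → v` of rules of `R` overlapping at a non-variable position
`π` of `u` (not a root overlap of variants of the same rule). -/
def CriticalPair (R : Set (Rule σ V)) (cp : Term σ V × Term σ V) : Prop :=
  ∃ r₁ r₂ r₁' r₂' : Rule σ V, r₁' ∈ R ∧ r₂' ∈ R ∧
    IsVariantOf r₁' r₁ ∧ IsVariantOf r₂' r₂ ∧
    (∀ x : V, x ∈ RuleVars r₁ → x ∉ RuleVars r₂) ∧
    ∃ (π : List ℕ) (u' : Term σ V),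
      r₂.lhs.subtermAt π = some u' ∧ ¬ u'.isVar ∧
      (π = [] → ¬ IsVariantOf r₁ r₂) ∧
      ∃ μ : V → Term σ V, IsMGU μ r₁.lhs u' ∧
        ∃ w : Term σ V,
          (Term.subst μ r₂.lhs).replaceAt π (Term.subst μ r₁.rhs) = some w ∧
          cp = (w, Term.subst μ r₂.rhs)

/-- `R` is non-overlapping iff it has no critical pairs. -/
def NonOverlapping (R : Set (Rule σ V)) : Prop := ∀ cp, ¬ CriticalPair R cp

/-- An innermost critical overlay: a critical pair at the root position whose
critical peak consists of two innermost rewrite steps. -/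
def InnermostCriticalOverlay (R : Set (Rule σ V)) (cp : Term σ V × Term σ V) : Prop :=
  ∃ r₁ r₂ r₁' r₂' : Rule σ V, r₁' ∈ R ∧ r₂' ∈ R ∧
    IsVariantOf r₁' r₁ ∧ IsVariantOf r₂' r₂ ∧
    (∀ x : V, x ∈ RuleVars r₁ → x ∉ RuleVars r₂) ∧
    ¬ IsVariantOf r₁ r₂ ∧
    ∃ μ : V → Term σ V, IsMGU μ r₁.lhs r₂.lhs ∧
      IsInnermostRedex R (Term.subst μ r₂.lhs) ∧
      cp = (Term.subst μ r₁.rhs, Term.subst μ r₂.rhs)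

/-! ## Positions with defined symbols and structural dependency chains -/

/-- Strict prefix order on positions: `PosGT τ π` iff `τ > π`,
i.e. `∃ π' ≠ ε, π π' = τ`. -/
def PosGT (τ π : List ℕ) : Prop := ∃ π' : List ℕ, π' ≠ [] ∧ π ++ π' = τ

/-- `PosD(t)`: positions of `t` with defined root symbol. -/
def PosD (R : Set (Rule σ V)) (t : Term σ V) : Set (List ℕ) :=
  { π | ∃ u, t.subtermAt π = some u ∧ HasDefinedRoot R u }

/-- Structural dependency chain `⟨π₁,…,πₖ⟩` for `t`: positions in `PosD(t)`
with `π₁ > … > πₖ`. -/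
def SDChain (R : Set (Rule σ V)) (t : Term σ V) (c : List (List ℕ)) : Prop :=
  (∀ π ∈ c, π ∈ PosD R t) ∧ c.Chain' PosGT

/-- Maximal structural dependency chains: `MSDC R t c` iff `c` is a maximal
structural dependency chain for `t`. -/
def MSDC (R : Set (Rule σ V)) (t : Term σ V) (c : List (List ℕ)) : Prop :=
  SDChain R t c ∧
    ((c = [] ∧ PosD R t = ∅) ∨
      ∃ (π₁ : List ℕ) (rest : List (List ℕ)), c = π₁ :: rest ∧
        ∀ π ∈ PosD R t, ¬ PosGT π π₁ ∧ (PosGT π₁ π → π ∈ rest))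

/-! ## Sharp terms, dependency tuples -/

/-- Extended signature: base symbols, sharp symbols `f#`, compound symbols `Com_n`. -/
inductive SharpSym (σ : Type) : Type where
  | base : σ → SharpSym σ
  | sharp : σ → SharpSym σ
  | com : ℕ → SharpSym σ

mutual
  def Term.embed : Term σ V → Term (SharpSym σ) V
    | Term.var x => Term.var x
    | Term.fn f ts => Term.fn (SharpSym.base f) (Term.embedList ts)
  def Term.embedList : List (Term σ V) → List (Term (SharpSym σ) V)
    | [] => []
    | t :: ts => Term.embed t :: Term.embedList ts
end

open Classical in
/-- `t#`: mark the root of `t` with its sharp symbol (if defined). -/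
noncomputable def Term.sharp (R : Set (Rule σ V)) : Term σ V → Term (SharpSym σ) V
  | Term.var x => Term.var x
  | Term.fn f ts =>
    if Defined R f then Term.fn (SharpSym.sharp f) (Term.embedList ts)
    else Term.fn (SharpSym.base f) (Term.embedList ts)

open Classical in
/-- Sharping on terms over the extended signature: for `t = f(…)` with `f` a
defined (base) symbol of `R`, mark the root; otherwise `t# = t`. -/
noncomputable def sharpC (R : Set (Rule σ V)) : Term (SharpSym σ) V → Term (SharpSym σ) V
  | Term.fn (SharpSym.base f) ts =>
    if Defined R f then Term.fn (SharpSym.sharp f) ts else Term.fn (SharpSym.base f) ts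
  | t => t

def liftRule (r : Rule σ V) : Rule (SharpSym σ) V :=
  { lhs := r.lhs.embed, rhs := r.rhs.embed }

def liftRules (R : Set (Rule σ V)) : Set (Rule (SharpSym σ) V) := liftRule '' R

/-- The dependency tuple `ℓ# → Com_k(u₁#,…,uₖ#)` built from subterms `u₁,…,uₖ`
of the right-hand side. -/
noncomputable def mkDT (R : Set (Rule σ V)) (ρ : Rule σ V) (us : List (Term σ V)) :
    Rule (SharpSym σ) V :=
  { lhs := Term.sharp R ρ.lhs,
    rhs := Term.fn (SharpSym.com us.length) (us.map (Term.sharp R)) }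

/-- `DTpar(ℓ → r)`: one dependency tuple per maximal structural dependency chain. -/
def DTparRule (R : Set (Rule σ V)) (ρ : Rule σ V) : Set (Rule (SharpSym σ) V) :=
  { d | ∃ (c : List (List ℕ)) (us : List (Term σ V)),
      MSDC R ρ.rhs c ∧
      List.Forall₂ (fun π u => ρ.rhs.subtermAt π = some u) c us ∧
      d = mkDT R ρ us }

/-- `DTpar(R)`. -/
def DTparSet (R : Set (Rule σ V)) : Set (Rule (SharpSym σ) V) :=
  ⋃ ρ ∈ R, DTparRule R ρ

/-! ## Chain trees and Cplx -/

/-- A (possibly infinite, finitely branching) tree whose nodes (addressed by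
paths) are labelled with a dependency tuple and a substitution; the child at
direction `i` corresponds to argument `i` of the `Com` symbol. -/
structure ChainTree (σ V : Type) where
  label : List ℕ → Option (Rule (SharpSym σ) V × (V → Term (SharpSym σ) V))

/-- `T` is a `(D,R)`-chain tree for the sharp term `t`. -/
def IsChainTree (D R : Set (Rule (SharpSym σ) V)) (T : ChainTree σ V)
    (t : Term (SharpSym σ) V) : Prop :=
  (∃ r ν, T.label [] = some (r, ν) ∧ Term.subst ν r.lhs = t) ∧
  (∀ (p : List ℕ) (i : ℕ), T.label (p ++ [i]) ≠ none → T.label p ≠ none) ∧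
  (∀ (p : List ℕ) (r : Rule (SharpSym σ) V) (ν : V → Term (SharpSym σ) V),
    T.label p = some (r, ν) →
      r ∈ D ∧ NormalForm R (Term.subst ν r.lhs) ∧
      ∀ (i : ℕ) (r' : Rule (SharpSym σ) V) (δ : V → Term (SharpSym σ) V),
        T.label (p ++ [i]) = some (r', δ) →
          ∃ (m : ℕ) (vs : List (Term (SharpSym σ) V)),
            r.rhs = Term.fn (SharpSym.com m) vs ∧
            ∃ v, vs[i]? = some v ∧
              Relation.ReflTransGen (InnermostRewrite R)
                (Term.subst ν v) (Term.subst δ r'.lhs))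

/-- `|T|_S`: the number of nodes of `T` labelled with a DT from `S`. -/
noncomputable def treeCount (T : ChainTree σ V) (S : Set (Rule (SharpSym σ) V)) : ℕ∞ :=
  Set.encard { p : List ℕ | ∃ r ν, T.label p = some (r, ν) ∧ r ∈ S }

/-- `Cplx⟨D,S,R⟩(t)`: the supremum of `|T|_S` over all `(D,R)`-chain trees `T`
for `t` (`0` if there is no chain tree). -/
noncomputable def Cplx (D S R : Set (Rule (SharpSym σ) V))
    (t : Term (SharpSym σ) V) : ℕ∞ :=
  sSup { c : ℕ∞ | ∃ T : ChainTree σ V, IsChainTree D R T t ∧ c = treeCount T S }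

/-- `irc⟨D,S,R⟩(n)`: runtime complexity of a DT problem. -/
noncomputable def ircDTP (D S : Set (Rule (SharpSym σ) V)) (R : Set (Rule σ V))
    (n : ℕ) : ℕ∞ :=
  sSup { c : ℕ∞ | ∃ t : Term σ V, BasicTerm R t ∧ t.size ≤ n ∧
    c = Cplx D S (liftRules R) (Term.sharp R t) }

/-! ## Relative rewriting -/

/-- An innermost rewrite step using a rule from `X`, with innermost-ness
relative to the whole system `W`. -/
def InnermostRewriteSub (W X : Set (Rule σ V)) (s t : Term σ V) : Prop :=
  ∃ π, ∃ r ∈ X, ∃ θ : V → Term σ V,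
    s.subtermAt π = some (Term.subst θ r.lhs) ∧
    IsInnermostRedex W (Term.subst θ r.lhs) ∧
    s.replaceAt π (Term.subst θ r.rhs) = some t

/-- Innermost relative rewriting `→i_{A/B}`:
`s →B* s' →A s'' →B* t`, all steps innermost wrt `A ∪ B`. -/
def RelInnermost (A B : Set (Rule σ V)) (s t : Term σ V) : Prop :=
  ∃ s' s'' : Term σ V,
    Relation.ReflTransGen (InnermostRewriteSub (A ∪ B) B) s s' ∧
    InnermostRewriteSub (A ∪ B) A s' s'' ∧
    Relation.ReflTransGen (InnermostRewriteSub (A ∪ B) B) s'' t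

/-- Innermost runtime complexity of a relative TRS `A/B`. -/
noncomputable def ircRel (A B : Set (Rule σ V)) (n : ℕ) : ℕ∞ :=
  sSup { d : ℕ∞ | ∃ t : Term σ V, BasicTerm (A ∪ B) t ∧ t.size ≤ n ∧
    d = Dh (RelInnermost A B) t }

/-! ## Dependency tuples (abstract DT problems) -/

inductive IsBaseTerm : Term (SharpSym σ) V → Prop
  | var (x : V) : IsBaseTerm (Term.var x)
  | fn (f : σ) (ts : List (Term (SharpSym σ) V)) :
      (∀ t ∈ ts, IsBaseTerm t) → IsBaseTerm (Term.fn (SharpSym.base f) ts)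

def IsSharpTerm (t : Term (SharpSym σ) V) : Prop :=
  ∃ (f : σ) (args : List (Term (SharpSym σ) V)),
    t = Term.fn (SharpSym.sharp f) args ∧ ∀ a ∈ args, IsBaseTerm a

/-- A dependency tuple: a rule `s# → Com_n(t₁#,…,tₙ#)`. -/
def IsDT (r : Rule (SharpSym σ) V) : Prop :=
  IsSharpTerm r.lhs ∧
    ∃ (n : ℕ) (ts : List (Term (SharpSym σ) V)),
      r.rhs = Term.fn (SharpSym.com n) ts ∧ ts.length = n ∧ ∀ t ∈ ts, IsSharpTerm t

/-! ## Argument normal forms -/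

/-- Argument normal form: a variable, or a term all of whose direct arguments
are normal forms. -/
def ArgNF (R : Set (Rule σ V)) (t : Term σ V) : Prop :=
  (∃ x, t = Term.var x) ∨ ∃ f ts, t = Term.fn f ts ∧ ∀ u ∈ ts, NormalForm R u

/-- A parallel-innermost step all of whose rewrites are at positions strictly
below the root. -/
def ParInnermostBelow (R : Set (Rule σ V)) (s t : Term σ V) : Prop :=
  ParInnermost R s t ∧ ¬ IsInnermostRedex R s

/-- `b` is a maximal parallel argument normal form of `u`. -/
noncomputable def MaxANF (R : Set (Rule σ V)) (u b : Term σ V) : Prop :=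
  ArgNF R b ∧ Relation.ReflTransGen (ParInnermostBelow R) u b ∧
    ∀ u', ArgNF R u' → Relation.ReflTransGen (ParInnermostBelow R) u u' →
      Dh (ParInnermost R) u' ≤ Dh (ParInnermost R) b

/-! ## Many-sorted type assignments -/

/-- Well-typedness of a term wrt a sort set `St`, a type assignment `arty`
(argument sorts and result sort for each symbol) and variable typing `vty`. -/
inductive WellTyped {τ : Type} (St : Type) (arty : τ → List St × St) (vty : V → St) :
    Term τ V → St → Prop
  | var (x : V) : WellTyped St arty vty (Term.var x) (vty x)
  | fn (f : τ) (ts : List (Term τ V)) :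
      ts.length = (arty f).1.length →
      (∀ p ∈ ts.zip (arty f).1, WellTyped St arty vty p.1 p.2) →
      WellTyped St arty vty (Term.fn f ts) (arty f).2

/-- A strict total order on positions extending the strict prefix order. -/
def TotalExtOfPrefix (gt' : List ℕ → List ℕ → Prop) : Prop :=
  (∀ π τ, PosGT π τ → gt' π τ) ∧
  (∀ π τ ρ, gt' π τ → gt' τ ρ → gt' π ρ) ∧
  (∀ π τ, gt' π τ → ¬ gt' τ π) ∧
  (∀ π τ, π ≠ τ → gt' π τ ∨ gt' τ π)


/-!
Take `R = {a → f(b,b), a → f(b,s(b)), b → s(b)}`, a variant of the paper's example in which `c`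
becomes `s(b)` and the cycle `b → c → b` becomes `b → s(b)`. All left-hand sides are constants, so every redex is
innermost and `→i = →_R`; the only critical peak `f(b,b) ← a → f(b,s(b))` closes in one step, so
`→_R` is strongly confluent. A tower `sⁿ(b)` is never a normal form and has the single innermost
redex `b`, so a parallel-innermost step from `f(sᵐ(b), sⁿ(b))` must rewrite both arguments and
leads to `f(sᵐ⁺¹(b), sⁿ⁺¹(b))` only. The difference `n - m` is therefore invariant under `⇉`, and
the two `⇉`-successors `f(b,b)` and `f(b,s(b))` of `a` have no common reduct.
-/

def StronglyConfluent {α : Type} (r : α → α → Prop) : Prop :=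
  ∀ a b c, r a b → r a c → ∃ d, Relation.ReflGen r b d ∧ Relation.ReflTransGen r c d

theorem StronglyConfluent.confluent {α : Type} {r : α → α → Prop}
    (h : StronglyConfluent r) : Confluent r :=
  fun _ _ _ => Relation.church_rosser h

mutual
  theorem Term.subst_eq_self [IsEmpty V] (θ : V → Term σ V) : ∀ t : Term σ V, t.subst θ = t
    | .var x => isEmptyElim x
    | .fn f ts => by rw [Term.subst, Term.substList_eq_self θ ts]
  theorem Term.substList_eq_self [IsEmpty V] (θ : V → Term σ V) :
      ∀ ts : List (Term σ V), Term.substList θ ts = ts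
    | [] => rfl
    | t :: ts => by rw [Term.substList, Term.subst_eq_self θ t, Term.substList_eq_self θ ts]
end

theorem Term.sizeList_lt_sizeList_set {ts : List (Term σ V)} {i : ℕ} {t t' : Term σ V}
    (hts : ts[i]? = some t) (h : t.size < t'.size) :
    Term.sizeList ts < Term.sizeList (ts.set i t') := by
  induction ts generalizing i with
  | nil => simp at hts
  | cons x xs ih =>
    cases i with
    | zero =>
      obtain rfl : x = t := by simpa using hts
      simp only [List.set_cons_zero, Term.sizeList]
      omega
    | succ i =>
      have := ih (by simpa using hts)
      simp only [List.set_cons_succ, Term.sizeList]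
      omega

inductive CtxClosure (r : Term σ V → Term σ V → Prop) : Term σ V → Term σ V → Prop
  | base {s t : Term σ V} : r s t → CtxClosure r s t
  | cong {f : σ} {ts : List (Term σ V)} {i : ℕ} {t t' : Term σ V} :
      ts[i]? = some t → CtxClosure r t t' →
        CtxClosure r (Term.fn f ts) (Term.fn f (ts.set i t'))

namespace CtxClosure

variable {r : Term σ V → Term σ V → Prop}

theorem size_lt (hr : ∀ s t, r s t → s.size < t.size) {s t : Term σ V}
    (h : CtxClosure r s t) : s.size < t.size := by
  induction h with
  | base h => exact hr _ _ h
  | cong hts _ ih =>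
    have := Term.sizeList_lt_sizeList_set hts ih
    simp only [Term.size]
    omega

theorem cong_set {f : σ} {ts : List (Term σ V)} {i : ℕ} (hi : i < ts.length) {t t' : Term σ V}
    (h : CtxClosure r t t') :
    CtxClosure r (Term.fn f (ts.set i t)) (Term.fn f (ts.set i t')) := by
  simpa using cong (f := f) (List.getElem?_set_self hi) h

theorem reflTransGen_cong_set {f : σ} {ts : List (Term σ V)} {i : ℕ} (hi : i < ts.length)
    {t t' : Term σ V} (h : Relation.ReflTransGen (CtxClosure r) t t') :
    Relation.ReflTransGen (CtxClosure r) (Term.fn f (ts.set i t)) (Term.fn f (ts.set i t')) :=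
  Relation.ReflTransGen.lift (fun u => Term.fn f (ts.set i u)) (fun _ _ => cong_set hi) _ _ h

theorem reflGen_cong_set {f : σ} {ts : List (Term σ V)} {i : ℕ} (hi : i < ts.length)
    {t t' : Term σ V} (h : Relation.ReflGen (CtxClosure r) t t') :
    Relation.ReflGen (CtxClosure r) (Term.fn f (ts.set i t)) (Term.fn f (ts.set i t')) := by
  cases h with
  | refl => exact .refl
  | single h => exact .single (cong_set hi h)

theorem of_const {g : σ} {t : Term σ V} (h : CtxClosure r (Term.fn g []) t) :
    r (Term.fn g []) t := by
  cases h with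
  | base h => exact h
  | cong hts _ => simp at hts

theorem stronglyConfluent (hconst : ∀ s t, r s t → ∃ g, s = Term.fn g [])
    (hroot : ∀ a b c, r a b → r a c →
      ∃ d, Relation.ReflGen (CtxClosure r) b d ∧ Relation.ReflTransGen (CtxClosure r) c d) :
    StronglyConfluent (CtxClosure r) := by
  have no_cong : ∀ {s t} {f : σ} {ts : List (Term σ V)} {i : ℕ} {u : Term σ V},
      r s t → s = Term.fn f ts → ts[i]? = some u → False := by
    rintro s t f ts i u hst rfl hts
    obtain ⟨g, hg⟩ := hconst _ _ hst
    cases hg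
    simp at hts
  intro a b c hab hac
  induction hab generalizing c with
  | base hab =>
    cases hac with
    | base hac => exact hroot _ _ _ hab hac
    | cong hts _ => exact (no_cong hab rfl hts).elim
  | @cong f ts i t t' hts hst ih =>
    have hi : i < ts.length := (List.getElem?_eq_some_iff.1 hts).1
    cases hac with
    | base hac => exact (no_cong hac rfl hts).elim
    | @cong _ _ j u u' htsj hsu =>
      by_cases hij : i = j
      · subst hij
        obtain rfl : t = u := Option.some.inj (hts.symm.trans htsj)
        obtain ⟨d, hd₁, hd₂⟩ := ih _ hsu
        refine ⟨Term.fn f (ts.set i d), ?_, ?_⟩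
        · exact reflGen_cong_set hi hd₁
        · exact reflTransGen_cong_set hi hd₂
      · refine ⟨Term.fn f ((ts.set i t').set j u'), .single (cong ?_ hsu), .single ?_⟩
        · rwa [List.getElem?_set_ne hij]
        · rw [List.set_comm _ _ hij]
          exact cong (by rwa [List.getElem?_set_ne (Ne.symm hij)]) hst

end CtxClosure

section Rewriting

variable {R : Set (Rule σ V)}

theorem isWfTRS_of_isEmpty [IsEmpty V] (hR : R.Finite) : IsWfTRS R :=
  ⟨hR, fun _ _ ⟨x, _⟩ => isEmptyElim x, fun _ _ x => isEmptyElim x⟩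

theorem isRedex_iff_of_isEmpty [IsEmpty V] {t : Term σ V} :
    IsRedex R t ↔ ∃ r ∈ R, t = r.lhs := by
  simp only [IsRedex, Term.subst_eq_self, exists_const]

theorem isInnermostRedex_const {g : σ} (h : IsRedex R (Term.fn g [])) :
    IsInnermostRedex R (Term.fn g []) := by
  refine ⟨h, fun π hπ u hu => ?_⟩
  obtain ⟨i, π, rfl⟩ := List.exists_cons_of_ne_nil hπ
  simp [Term.subtermAt] at hu

theorem innermostRewrite_eq_rewrite (hR : ∀ t, IsRedex R t → IsInnermostRedex R t) :
    InnermostRewrite R = Rewrite R := by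
  ext s t
  constructor
  · rintro ⟨π, r, hr, θ, h₁, -, h₂⟩
    exact ⟨π, r, hr, θ, h₁, h₂⟩
  · rintro ⟨π, r, hr, θ, h₁, h₂⟩
    exact ⟨π, r, hr, θ, h₁, hR _ ⟨r, hr, θ, rfl⟩, h₂⟩

theorem rewriteAt_nil_iff_mem [IsEmpty V] {s t : Term σ V} :
    RewriteAt R [] s t ↔ ⟨s, t⟩ ∈ R := by
  simp only [RewriteAt, Term.subtermAt, Term.replaceAt, Term.subst_eq_self, Option.some.injEq,
    exists_const]
  exact ⟨fun ⟨r, hr, hs, ht⟩ => hs ▸ ht ▸ hr, fun h => ⟨_, h, rfl, rfl⟩⟩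

theorem rewriteAt_cons_iff {f : σ} {ts : List (Term σ V)} {i : ℕ} {π : List ℕ}
    {u : Term σ V} :
    RewriteAt R (i :: π) (Term.fn f ts) u ↔
      ∃ t t', ts[i]? = some t ∧ RewriteAt R π t t' ∧ u = Term.fn f (ts.set i t') := by
  constructor
  · rintro ⟨r, hr, θ, h₁, h₂⟩
    cases hts : ts[i]? with
    | none => simp [Term.subtermAt, hts] at h₁
    | some t =>
      simp only [Term.subtermAt, Term.replaceAt, hts] at h₁ h₂
      cases hrep : Term.replaceAt t π (Term.subst θ r.rhs) with
      | none => simp [hrep] at h₂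
      | some t' =>
        simp only [hrep, Option.some.injEq] at h₂
        exact ⟨t, t', rfl, ⟨r, hr, θ, h₁, hrep⟩, h₂.symm⟩
  · rintro ⟨t, t', hts, ⟨r, hr, θ, h₁, h₂⟩, rfl⟩
    exact ⟨r, hr, θ, by simpa [Term.subtermAt, hts] using h₁,
      by simp [Term.replaceAt, hts, h₂]⟩

theorem rewrite_eq_ctxClosure : Rewrite R = CtxClosure (RewriteAt R []) := by
  ext s t
  constructor
  · rintro ⟨π, h⟩
    induction π generalizing s t with
    | nil => exact .base h
    | cons i π ih =>
      cases s with
      | var x =>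
        obtain ⟨r, -, θ, h, -⟩ := h
        simp [Term.subtermAt] at h
      | fn f ts =>
        obtain ⟨t, t', hts, h', rfl⟩ := rewriteAt_cons_iff.1 h
        exact .cong hts (ih _ _ h')
  · intro h
    induction h with
    | base h => exact ⟨[], h⟩
    | cong hts _ ih =>
      obtain ⟨π, h⟩ := ih
      exact ⟨_ :: π, rewriteAt_cons_iff.2 ⟨_, _, hts, h, rfl⟩⟩

theorem rewrite_eq_ctxClosure_of_isEmpty [IsEmpty V] :
    Rewrite R = CtxClosure (fun s t => ⟨s, t⟩ ∈ R) := by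
  rw [rewrite_eq_ctxClosure]
  congr
  ext s t
  exact rewriteAt_nil_iff_mem

end Rewriting

namespace ParInnermost

variable {R : Set (Rule σ V)}

theorem exists_forall₂_of_not_isRedex {f : σ} {ss : List (Term σ V)} {u : Term σ V}
    (h : ParInnermost R (Term.fn f ss) u) (hs : ¬ IsRedex R (Term.fn f ss)) :
    ∃ ts, u = Term.fn f ts ∧
      List.Forall₂ (fun s t => ParInnermost R s t ∨ s = t ∧ NormalForm R s) ss ts := by
  cases h with
  | redex _ hred _ => exact absurd hred.1 hs
  | congr _ _ ts _ hlen hargs =>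
    refine ⟨ts, rfl, List.forall₂_iff_zip.2 ⟨hlen, fun {s t} hst => ?_⟩⟩
    by_cases hnf : s = t ∧ NormalForm R s
    · exact .inr hnf
    · exact .inl (hargs (s, t) hst hnf)

end ParInnermost

namespace Counterexample

inductive Sym : Type
  | a | b | f | s

abbrev Tm := Term Sym Empty

def A : Tm := .fn .a []
def B : Tm := .fn .b []
def S (t : Tm) : Tm := .fn .s [t]
def F (t u : Tm) : Tm := .fn .f [t, u]

def tower : ℕ → Tm
  | 0 => B
  | n + 1 => S (tower n)

def R : Set (Rule Sym Empty) := {⟨A, F B B⟩, ⟨A, F B (S B)⟩, ⟨B, S B⟩}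

theorem mem_R {s t : Tm} :
    (⟨s, t⟩ : Rule Sym Empty) ∈ R ↔
      s = A ∧ t = F B B ∨ s = A ∧ t = F B (S B) ∨ s = B ∧ t = S B := by
  simp [R]

theorem isWfTRS_R : IsWfTRS R :=
  isWfTRS_of_isEmpty (((Set.finite_singleton _).insert _).insert _)

theorem isRedex_R_iff {t : Tm} : IsRedex R t ↔ t = A ∨ t = B := by
  simp [isRedex_iff_of_isEmpty, R]

theorem exists_eq_const_of_mem_R {s t : Tm} (h : (⟨s, t⟩ : Rule Sym Empty) ∈ R) :
    ∃ g, s = .fn g [] := by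
  rcases mem_R.1 h with ⟨rfl, -⟩ | ⟨rfl, -⟩ | ⟨rfl, -⟩ <;> exact ⟨_, rfl⟩

theorem innermostRewrite_R_eq : InnermostRewrite R = Rewrite R :=
  innermostRewrite_eq_rewrite fun t ht => by
    obtain ⟨r, hr, rfl⟩ := isRedex_iff_of_isEmpty.1 ht
    obtain ⟨g, hg⟩ := exists_eq_const_of_mem_R (s := r.lhs) (t := r.rhs) hr
    exact hg ▸ isInnermostRedex_const (hg ▸ ht)

theorem rewrite_R_eq : Rewrite R = CtxClosure (fun s t => (⟨s, t⟩ : Rule Sym Empty) ∈ R) :=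
  rewrite_eq_ctxClosure_of_isEmpty

theorem stronglyConfluent_rewrite_R : StronglyConfluent (Rewrite R) := by
  have hB : CtxClosure (fun s t => (⟨s, t⟩ : Rule Sym Empty) ∈ R) (F B B) (F B (S B)) :=
    .cong (i := 1) rfl (.base (by simp [R]))
  rw [rewrite_R_eq]
  refine CtxClosure.stronglyConfluent (fun _ _ => exists_eq_const_of_mem_R)
    fun a b c hab hac => ?_
  rcases mem_R.1 hab with ⟨rfl, rfl⟩ | ⟨rfl, rfl⟩ | ⟨rfl, rfl⟩ <;>
    rcases mem_R.1 hac with ⟨h, rfl⟩ | ⟨h, rfl⟩ | ⟨h, rfl⟩ <;>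
    simp only [A, B, Term.fn.injEq, reduceCtorEq, false_and] at h
  · exact ⟨_, .refl, .refl⟩
  · exact ⟨_, .single hB, .refl⟩
  · exact ⟨_, .refl, .single hB⟩
  · exact ⟨_, .refl, .refl⟩
  · exact ⟨_, .refl, .refl⟩

theorem size_lt_of_transGen {s t : Tm} (h : Relation.TransGen (InnermostRewrite R) s t) :
    s.size < t.size := by
  rw [innermostRewrite_R_eq, rewrite_R_eq] at h
  have hroot : ∀ s t : Tm, (⟨s, t⟩ : Rule Sym Empty) ∈ R → s.size < t.size := by
    intro s t h
    rcases mem_R.1 h with ⟨rfl, rfl⟩ | ⟨rfl, rfl⟩ | ⟨rfl, rfl⟩ <;>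
      simp [A, B, F, S, Term.size, Term.sizeList]
  simpa [Relation.transGen_eq_self] using
    Relation.TransGen.lift Term.size (fun _ _ => CtxClosure.size_lt hroot) _ _ h

theorem tower_injective : Function.Injective tower := by
  intro m n h
  induction m generalizing n with
  | zero => cases n <;> simp_all [tower, B, S]
  | succ m ih =>
    cases n with
    | zero => simp [tower, B, S] at h
    | succ n => exact congrArg (· + 1) (ih (by simpa [tower, S] using h))

theorem rewrite_tower (n : ℕ) : Rewrite R (tower n) (tower (n + 1)) := by
  rw [rewrite_R_eq]
  induction n with
  | zero => exact .base (by simp [R, tower])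
  | succ n ih => exact .cong (i := 0) rfl ih

theorem not_normalForm_tower (n : ℕ) : ¬ NormalForm R (tower n) :=
  fun h => h ⟨_, rewrite_tower n⟩

theorem parInnermost_B {u : Tm} (h : ParInnermost R B u) : u = S B := by
  -- `ParInnermost.congr` without arguments yields `b ⇉ b` as soon as `b →i⁺ b`; the size
  -- increase along `→i` rules this out.
  have hstep : InnermostRewrite R B u := by
    cases h with
    | redex _ _ hstep => exact hstep
    | congr _ _ ts htg hlen =>
      obtain rfl : ts = [] := List.eq_nil_of_length_eq_zero hlen.symm
      exact absurd (size_lt_of_transGen htg) (lt_irrefl _)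
  rw [innermostRewrite_R_eq, rewrite_R_eq] at hstep
  simpa [A, B] using mem_R.1 hstep.of_const

theorem parInnermost_tower {n : ℕ} {u : Tm} (h : ParInnermost R (tower n) u) :
    u = tower (n + 1) := by
  induction n generalizing u with
  | zero => exact parInnermost_B h
  | succ n ih =>
    rcases h.exists_forall₂_of_not_isRedex (by simp [isRedex_R_iff, A, B]) with
      ⟨_, rfl, _ | ⟨harg, _ | _⟩⟩
    rw [ih (harg.resolve_right fun h => not_normalForm_tower n h.2)]
    rfl

theorem parInnermost_F {m n : ℕ} {u : Tm} (h : ParInnermost R (F (tower m) (tower n)) u) :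
    u = F (tower (m + 1)) (tower (n + 1)) := by
  rcases h.exists_forall₂_of_not_isRedex (by simp [isRedex_R_iff, A, B]) with
    ⟨_, rfl, _ | ⟨harg₁, _ | ⟨harg₂, _ | _⟩⟩⟩
  rw [parInnermost_tower (harg₁.resolve_right fun h => not_normalForm_tower m h.2),
    parInnermost_tower (harg₂.resolve_right fun h => not_normalForm_tower n h.2)]
  rfl

theorem reflTransGen_parInnermost_F {m n : ℕ} {v : Tm}
    (h : Relation.ReflTransGen (ParInnermost R) (F (tower m) (tower n)) v) :
    ∃ k, v = F (tower (m + k)) (tower (n + k)) := by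
  induction h with
  | refl => exact ⟨0, rfl⟩
  | tail _ hstep ih =>
    obtain ⟨k, rfl⟩ := ih
    exact ⟨k + 1, parInnermost_F hstep⟩

theorem not_confluent_parInnermost_R : ¬ Confluent (ParInnermost R) := by
  have hA : IsInnermostRedex R A := isInnermostRedex_const (isRedex_R_iff.2 (.inl rfl))
  have step : ∀ t, (⟨A, t⟩ : Rule Sym Empty) ∈ R → ParInnermost R A t := by
    intro t ht
    have hs : InnermostRewrite R A t := by
      rw [innermostRewrite_R_eq, rewrite_R_eq]
      exact .base ht
    exact .redex (.single hs) hA hs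
  intro hconf
  obtain ⟨v, h₁, h₂⟩ := hconf A (F (tower 0) (tower 0)) (F (tower 0) (tower 1))
    (.single (step _ (by simp [R, tower]))) (.single (step _ (by simp [R, tower])))
  obtain ⟨k, rfl⟩ := reflTransGen_parInnermost_F h₁
  obtain ⟨j, hj⟩ := reflTransGen_parInnermost_F h₂
  simp only [F, Term.fn.injEq, List.cons.injEq, true_and, and_true] at hj
  have := tower_injective hj.1
  have := tower_injective hj.2
  omega

end Counterexample

/-- There is a TRS `R` such that both `→_R` and `→i` are
confluent but `⇉` is not confluent. -/
theorem exists_trs_rewrite_innermost_confluent_parInnermost_not_confluent :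
    ∃ (σ V : Type) (R : Set (Rule σ V)), IsWfTRS R ∧
      Confluent (Rewrite R) ∧ Confluent (InnermostRewrite R) ∧
      ¬ Confluent (ParInnermost R) := by
  have hconf : Confluent (Rewrite Counterexample.R) :=
    Counterexample.stronglyConfluent_rewrite_R.confluent
  refine ⟨_, _, Counterexample.R, Counterexample.isWfTRS_R, hconf, ?_,
    Counterexample.not_confluent_parInnermost_R⟩
  rwa [Counterexample.innermostRewrite_R_eq]

end ParallelComplexity
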